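/- Let F be an arc on the unit circle and α ∈ (0,1). For every z in the level set L_F(α) = {z ∈ D : χ̂_F(z) = α}, the Wirtinger derivative satisfies |∂χ̂_F/∂z (z)| = sin(πα)/(π(1−|z|²)). -/

import Mathlib

open Complex Metric Real

/-- The Poisson integral of the characteristic function of the arc
`F = {e^{iθ} : a < θ < b}`. -/
noncomputable def poissonArc (a b : ℝ) (z : ℂ) : ℝ :=
  (∫ θ in a..b, ((Complex.exp (θ * Complex.I) + z) /
      (Complex.exp (θ * Complex.I) - z)).re) / (2 * Real.pi)

/-- The Wirtinger derivative `∂u/∂z = (1/2)(∂u/∂x − i ∂u/∂y)`. -/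
noncomputable def wirtinger (u : ℂ → ℝ) (z : ℂ) : ℂ :=
  (1 / 2) * ((fderiv ℝ u z 1 : ℝ) - Complex.I * (fderiv ℝ u z Complex.I : ℝ))

/-!
The Herglotz integral `H(z) = ∫_a^b (e^{iθ} + z)/(e^{iθ} - z) dθ` of the arc is elementary:
since `1 - z e^{-iθ}` stays in the right half-plane for `|z| < 1`, `θ - 2i log (1 - z e^{-iθ})`
is a primitive of the kernel, so `H(z) = (b - a) - 2i (log q - log p)` with
`p = 1 - z e^{-ia}` and `q = 1 - z e^{-ib}`. As `χ̂_F = Re H / 2π`, its Wirtinger derivative is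
`H'/4π`, of modulus `|e^{ia} - e^{ib}| / (2π |e^{ia} - z| |e^{ib} - z|)`, while
`π χ̂_F(z) = (b - a)/2 + arg q - arg p`. Expanding `Im (e^{i(b-a)/2} q p̄)` gives
`sin (π χ̂_F(z)) |e^{ia} - z| |e^{ib} - z| = (1 - |z|²) sin ((b - a)/2)`, and
`|e^{ia} - e^{ib}| = 2 |sin ((b - a)/2)|`; hence `|∂χ̂_F/∂z| = |sin (π χ̂_F)| / (π (1 - |z|²))`
on the whole disk, and on a level set `χ̂_F = α ∈ (0, 1)` the sine is positive.
-/

open ComplexConjugate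

lemma HasDerivAt.wirtinger_re {H : ℂ → ℂ} {D z : ℂ} (hH : HasDerivAt H D z) :
    wirtinger (fun ζ => (H ζ).re) z = D / 2 := by
  have hre : HasFDerivAt (fun ζ => (H ζ).re)
      (reCLM.comp ((ContinuousLinearMap.toSpanSingleton ℂ D).restrictScalars ℝ)) z :=
    reCLM.hasFDerivAt.comp z (hH.hasFDerivAt.restrictScalars ℝ)
  rw [wirtinger, hre.fderiv]
  simp only [ContinuousLinearMap.comp_apply, ContinuousLinearMap.coe_restrictScalars',
    ContinuousLinearMap.toSpanSingleton_apply, smul_eq_mul, one_mul, reCLM_apply, I_mul_re]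
  rw [ofReal_neg, mul_neg, sub_neg_eq_add, mul_comm I, re_add_im]
  ring

lemma Filter.EventuallyEq.wirtinger_eq {u v : ℂ → ℝ} {z : ℂ} (h : u =ᶠ[nhds z] v) :
    wirtinger u z = wirtinger v z := by
  rw [wirtinger, wirtinger, h.fderiv_eq]

lemma im_exp_mul_mul_conj (s : ℝ) (p q : ℂ) :
    (exp (s * I) * q * conj p).im = ‖p‖ * ‖q‖ * Real.sin (s + arg q - arg p) := by
  conv_lhs => rw [← norm_mul_exp_arg_mul_I p, ← norm_mul_exp_arg_mul_I q]
  rw [map_mul, ← exp_conj, map_mul, conj_ofReal, conj_ofReal, conj_I]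
  have : exp (s * I) * (‖q‖ * exp (arg q * I)) * (‖p‖ * exp (arg p * -I)) =
      (‖p‖ * ‖q‖ : ℝ) * exp ((s + arg q - arg p : ℝ) * I) := by
    push_cast
    rw [show ((s : ℂ) + arg q - arg p) * I = s * I + arg q * I + arg p * -I by ring,
      Complex.exp_add, Complex.exp_add]
    ring
  rw [this, im_ofReal_mul, exp_ofReal_mul_I_im]

lemma norm_exp_mul_I_sub_exp_mul_I (a b : ℝ) :
    ‖exp (a * I) - exp (b * I)‖ = 2 * |Real.sin ((b - a) / 2)| := by
  have : exp (a * I) - exp (b * I) = exp (b * I) * (exp (I * ((a - b : ℝ) : ℂ)) - 1) := by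
    rw [mul_sub, mul_one, ← Complex.exp_add]
    push_cast
    ring_nf
  rw [this, norm_mul, norm_exp_ofReal_mul_I, one_mul, norm_exp_I_mul_ofReal_sub_one, norm_mul,
    Real.norm_eq_abs, Real.norm_eq_abs, abs_two, ← abs_neg (Real.sin _), ← Real.sin_neg]
  ring_nf

lemma im_exp_mul_one_sub_mul_conj (a b : ℝ) (z : ℂ) :
    (exp (((b - a) / 2 : ℝ) * I) * (1 - z * exp (-(b * I))) *
        conj (1 - z * exp (-(a * I)))).im = (1 - ‖z‖ ^ 2) * Real.sin ((b - a) / 2) := by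
  set s := (b - a) / 2
  set m := (a + b) / 2
  have expand : exp (s * I) * (1 - z * exp (-(b * I))) * conj (1 - z * exp (-(a * I)))
      = exp (s * I) - (z * exp (-(m * I)) + conj (z * exp (-(m * I))))
        + (normSq z : ℂ) * exp ((-s : ℝ) * I) := by
    rw [← mul_conj, show a = m - s by ring, show b = m + s by ring]
    simp only [map_sub, map_mul, map_one, ← exp_conj, map_neg, conj_ofReal, conj_I]
    push_cast
    simp only [neg_neg, add_mul, sub_mul, neg_add, neg_sub, Complex.exp_add, Complex.exp_sub,
      Complex.exp_neg, mul_neg, neg_mul]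
    field_simp
    ring
  rw [expand, add_conj, Complex.sq_norm]
  simp only [add_im, sub_im, exp_ofReal_mul_I_im, im_ofReal_mul, ofReal_im, Real.sin_neg]
  ring

lemma exp_mul_I_sub_eq (θ : ℝ) (z : ℂ) :
    exp (θ * I) - z = exp (θ * I) * (1 - z * exp (-(θ * I))) := by
  rw [mul_sub, mul_one, mul_left_comm, ← Complex.exp_add, add_neg_cancel, Complex.exp_zero,
    mul_one]

lemma norm_exp_mul_I_sub (θ : ℝ) (z : ℂ) : ‖exp (θ * I) - z‖ = ‖1 - z * exp (-(θ * I))‖ := by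
  rw [exp_mul_I_sub_eq, norm_mul, norm_exp_ofReal_mul_I, one_mul]

noncomputable def herglotzArc (a b : ℝ) (z : ℂ) : ℂ :=
  ∫ θ in a..b, (exp (θ * I) + z) / (exp (θ * I) - z)

section UnitDisk

variable (a b : ℝ) {z : ℂ} (hz : ‖z‖ < 1)
include hz

lemma one_sub_mul_exp_mem_slitPlane (θ : ℝ) : 1 - z * exp (-(θ * I)) ∈ slitPlane := by
  rw [sub_eq_add_neg]
  apply mem_slitPlane_of_norm_lt_one
  rwa [norm_neg, norm_mul, ← neg_mul, ← ofReal_neg, norm_exp_ofReal_mul_I, mul_one]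

lemma exp_mul_I_sub_ne_zero (θ : ℝ) : exp (θ * I) - z ≠ 0 := by
  rw [exp_mul_I_sub_eq]
  exact mul_ne_zero (exp_ne_zero _) (slitPlane_ne_zero (one_sub_mul_exp_mem_slitPlane hz θ))

lemma hasDerivAt_log_one_sub_mul_exp (θ : ℝ) :
    HasDerivAt (fun t : ℝ => log (1 - z * exp (-(t * I)))) (I * z / (exp (θ * I) - z)) θ := by
  have hexp : HasDerivAt (fun t : ℝ => exp (-(t * I))) (-I * exp (-(θ * I))) θ := by
    simpa [mul_comm] using (((hasDerivAt_id (θ : ℂ)).mul_const I).neg.cexp).comp_ofReal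
  convert ((hexp.const_mul z).const_sub 1).clog_real (one_sub_mul_exp_mem_slitPlane hz θ) using 1
  rw [exp_mul_I_sub_eq, Complex.exp_neg]
  field_simp

lemma continuous_herglotzKernel :
    Continuous fun θ : ℝ => (exp (θ * I) + z) / (exp (θ * I) - z) :=
  .div (by fun_prop) (by fun_prop) (exp_mul_I_sub_ne_zero hz)

lemma poissonArc_eq_re_herglotzArc : poissonArc a b z = (herglotzArc a b z).re / (2 * π) := by
  rw [poissonArc, herglotzArc]
  congr 1
  exact intervalIntegral.intervalIntegral_re
    ((continuous_herglotzKernel hz).intervalIntegrable a b)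

lemma herglotzArc_eq : herglotzArc a b z =
    (b - a) - 2 * I * (log (1 - z * exp (-(b * I))) - log (1 - z * exp (-(a * I)))) := by
  have hprim : ∀ θ : ℝ, HasDerivAt (fun t : ℝ => (t : ℂ) - 2 * I * log (1 - z * exp (-(t * I))))
      ((exp (θ * I) + z) / (exp (θ * I) - z)) θ := by
    intro θ
    refine ((hasDerivAt_id' θ).ofReal_comp.sub
      ((hasDerivAt_log_one_sub_mul_exp hz θ).const_mul (2 * I))).congr_deriv ?_
    have hne := exp_mul_I_sub_ne_zero hz θ
    rw [ofReal_one, eq_div_iff hne, sub_mul, mul_div_assoc', div_mul_cancel₀ _ hne]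
    linear_combination (-2 * z) * I_sq
  rw [herglotzArc, intervalIntegral.integral_eq_sub_of_hasDerivAt (fun θ _ => hprim θ)
    ((continuous_herglotzKernel hz).intervalIntegrable a b)]
  ring

lemma hasDerivAt_herglotzArc :
    HasDerivAt (herglotzArc a b) (2 * I / (exp (b * I) - z) - 2 * I / (exp (a * I) - z)) z := by
  have hlog : ∀ θ : ℝ, HasDerivAt (fun ζ => log (1 - ζ * exp (-(θ * I))))
      (-1 / (exp (θ * I) - z)) z := by
    intro θ
    convert (((hasDerivAt_id' z).mul_const (exp (-(θ * I)))).const_sub 1).clog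
      (one_sub_mul_exp_mem_slitPlane hz θ) using 1
    rw [exp_mul_I_sub_eq, Complex.exp_neg]
    field_simp
  have hclosed := ((hlog b).sub (hlog a)).const_mul (2 * I) |>.const_sub ((b - a : ℝ) : ℂ)
  refine (hclosed.congr_of_eventuallyEq ?_).congr_deriv (by ring)
  filter_upwards [Metric.isOpen_ball.mem_nhds (mem_ball_zero_iff.2 hz)] with ζ hζ
  rw [herglotzArc_eq a b (mem_ball_zero_iff.1 hζ), Pi.sub_apply]
  push_cast
  ring

lemma wirtinger_poissonArc : wirtinger (poissonArc a b) z =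
    I * (exp (a * I) - exp (b * I)) / (2 * π * ((exp (a * I) - z) * (exp (b * I) - z))) := by
  have hpoisson :
      poissonArc a b =ᶠ[nhds z] fun ζ => (herglotzArc a b ζ / ((2 * π : ℝ) : ℂ)).re := by
    filter_upwards [Metric.isOpen_ball.mem_nhds (mem_ball_zero_iff.2 hz)] with ζ hζ
    rw [div_ofReal_re, poissonArc_eq_re_herglotzArc a b (mem_ball_zero_iff.1 hζ)]
  rw [hpoisson.wirtinger_eq, ((hasDerivAt_herglotzArc a b hz).div_const _).wirtinger_re]
  have hA := exp_mul_I_sub_ne_zero hz a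
  have hB := exp_mul_I_sub_ne_zero hz b
  generalize exp (a * I) = A at hA ⊢
  generalize exp (b * I) = B at hB ⊢
  field_simp
  push_cast
  ring

lemma sin_pi_mul_poissonArc :
    Real.sin (π * poissonArc a b z) * (‖exp (a * I) - z‖ * ‖exp (b * I) - z‖)
      = (1 - ‖z‖ ^ 2) * Real.sin ((b - a) / 2) := by
  have harg : π * poissonArc a b z =
      (b - a) / 2 + arg (1 - z * exp (-(b * I))) - arg (1 - z * exp (-(a * I))) := by
    rw [poissonArc_eq_re_herglotzArc a b hz, herglotzArc_eq a b hz]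
    simp only [sub_re, ofReal_re, mul_re, re_ofNat, I_re, im_ofNat, I_im, mul_im, sub_im, log_im]
    field_simp
    ring
  rw [harg, norm_exp_mul_I_sub, norm_exp_mul_I_sub, ← im_exp_mul_one_sub_mul_conj,
    im_exp_mul_mul_conj]
  ring

lemma norm_wirtinger_poissonArc : ‖wirtinger (poissonArc a b) z‖ =
    |Real.sin (π * poissonArc a b z)| / (π * (1 - ‖z‖ ^ 2)) := by
  have hA := norm_pos_iff.2 (exp_mul_I_sub_ne_zero hz a)
  have hB := norm_pos_iff.2 (exp_mul_I_sub_ne_zero hz b)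
  have hdisk : 0 < 1 - ‖z‖ ^ 2 := by nlinarith [norm_nonneg z]
  have hsin := congrArg abs (sin_pi_mul_poissonArc a b hz)
  rw [abs_mul, abs_mul, abs_mul, abs_norm, abs_norm, abs_of_pos hdisk] at hsin
  rw [wirtinger_poissonArc a b hz, norm_div, norm_mul, norm_I, one_mul,
    norm_exp_mul_I_sub_exp_mul_I, norm_mul, norm_mul, norm_mul, Complex.norm_two, norm_real,
    Real.norm_of_nonneg pi_pos.le, div_eq_div_iff (by positivity) (by positivity)]
  linear_combination (-2 * π) * hsin

end UnitDisk

theorem abs_wirtinger_on_levelSet_general (a b : ℝ)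
    (α : ℝ) (hα : α ∈ Set.Ioo (0 : ℝ) 1) (z : ℂ) (hz : z ∈ ball (0 : ℂ) 1)
    (hzα : poissonArc a b z = α) :
    ‖wirtinger (poissonArc a b) z‖ =
      Real.sin (Real.pi * α) / (Real.pi * (1 - ‖z‖ ^ 2)) := by
  have hsin : 0 < Real.sin (π * α) :=
    Real.sin_pos_of_pos_of_lt_pi (mul_pos pi_pos hα.1) (mul_lt_of_lt_one_right pi_pos hα.2)
  rw [norm_wirtinger_poissonArc a b (mem_ball_zero_iff.1 hz), hzα, abs_of_pos hsin]

/-- For an arc `F = {e^{iθ} : a < θ < b}` on the unit circle, `α ∈ (0,1)`,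
and any `z` in the level set `L_F(α) = {z ∈ D : χ̂_F(z) = α}`, one has
`|∂χ̂_F/∂z (z)| = sin(πα)/(π(1 − |z|²))`. -/
theorem abs_wirtinger_on_levelSet (a b : ℝ) (hab : 0 < b - a) (hab' : b - a < 2 * Real.pi)
    (α : ℝ) (hα : α ∈ Set.Ioo (0 : ℝ) 1) (z : ℂ) (hz : z ∈ ball (0 : ℂ) 1)
    (hzα : poissonArc a b z = α) :
    ‖wirtinger (poissonArc a b) z‖ =
      Real.sin (Real.pi * α) / (Real.pi * (1 - ‖z‖ ^ 2)) :=
  abs_wirtinger_on_levelSet_general a b α hα z hz hzα
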